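/- Let G = (V,E) be a finite d-regular graph (d ≥ 2) with adjacency matrix A and non-backtracking matrix B. Then a complex number λ with |λ| ≠ 1 is an eigenvalue of B if and only if there exists an eigenvalue μ of A such that λ² − μλ + (d−1) = 0. -/

import Mathlib

/-!
If `Bφ = λφ`, put `S v = ∑_{e₊ = v} φ e` and `T v = ∑_{e₋ = v} φ e`. Summing the eigenvalue
equation `S(f₋) - φ(f⁻¹) = λ φ(f)` over the edges entering, resp. leaving, a vertex gives
`λS = AS - T` and `λT = (d - 1)S`, hence `λ AS = (λ² + d - 1) S`. Moreover
`(λ² - 1) φ(f) = λ S(f₋) - S(f₊)`, so `S ≠ 0` when `λ² ≠ 1`, and then `λ ≠ 0` since `d ≠ 1`.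
Conversely, if `Aψ = μψ` and `λ² - μλ + d - 1 = 0`, then `φ(e) = ψ(e₊) - λ ψ(e₋)` satisfies
`Bφ = λφ`, and `φ ≠ 0` when `λ² ≠ 1` because every vertex has an outgoing edge.
-/

/-- A graph given by a countable (here finite) set of oriented edges: each edge `e` has an
origin `src e`, a destination `tgt e`, and the edge set carries a fixed-point-free
involution `e ↦ inv e` with `tgt (inv e) = src e`. -/
structure OrientedGraph (V E : Type*) where
  src : E → V
  tgt : E → V
  inv : E → E
  inv_inv : ∀ e, inv (inv e) = e
  inv_ne : ∀ e, inv e ≠ e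
  tgt_inv : ∀ e, tgt (inv e) = src e

variable {V E : Type*} [Fintype V] [Fintype E] [DecidableEq V] [DecidableEq E]

/-- The adjacency matrix: `A v u` is the number of oriented edges from `u` to `v`. -/
noncomputable def adjMatrix (G : OrientedGraph V E) : Matrix V V ℂ :=
  Matrix.of fun v u =>
    ((Finset.univ.filter fun e : E => G.src e = u ∧ G.tgt e = v).card : ℂ)

/-- The non-backtracking matrix `B`, acting by `(Bφ)(f) = ∑_{e : e₊ = f₋, e ≠ f⁻¹} φ(e)`. -/
noncomputable def nbMatrix (G : OrientedGraph V E) : Matrix E E ℂ :=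
  Matrix.of fun f e => if G.tgt e = G.src f ∧ e ≠ G.inv f then 1 else 0

/-- `G` is `d`-regular: every vertex has degree `d`. -/
def RegularGraph (G : OrientedGraph V E) (d : ℕ) : Prop :=
  ∀ v : V, (Finset.univ.filter fun e : E => G.src e = v).card = d

open Finset Matrix

namespace OrientedGraph

omit [Fintype V] [Fintype E] [DecidableEq V] [DecidableEq E] in
theorem src_inv (G : OrientedGraph V E) (e : E) : G.src (G.inv e) = G.tgt e := by
  simpa [G.inv_inv] using (G.tgt_inv (G.inv e)).symm

omit [Fintype V] [DecidableEq E] in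
theorem src_surjective {G : OrientedGraph V E} {d : ℕ} (hreg : RegularGraph G d) (hd : d ≠ 0) :
    Function.Surjective G.src := fun v => by
  obtain ⟨e, he⟩ := card_pos.1 (show 0 < #{e | G.src e = v} by rw [hreg v]; omega)
  exact ⟨e, (mem_filter.1 he).2⟩

section EdgeSums

omit [Fintype V] [DecidableEq E]

variable (G : OrientedGraph V E)

def inSum {M : Type*} [AddCommMonoid M] (φ : E → M) (v : V) : M :=
  ∑ e with G.tgt e = v, φ e

def outSum {M : Type*} [AddCommMonoid M] (φ : E → M) (v : V) : M :=
  ∑ e with G.src e = v, φ e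

theorem inSum_eq_outSum_comp_inv {M : Type*} [AddCommMonoid M] (φ : E → M) :
    G.inSum φ = G.outSum (φ ∘ G.inv) := by
  funext v
  exact sum_nbij' G.inv G.inv (by simp [G.src_inv]) (by simp [G.tgt_inv])
    (by simp [G.inv_inv]) (by simp [G.inv_inv]) (by simp [G.inv_inv])

theorem outSum_eq_inSum_comp_inv {M : Type*} [AddCommMonoid M] (φ : E → M) :
    G.outSum φ = G.inSum (φ ∘ G.inv) := by
  rw [inSum_eq_outSum_comp_inv, Function.comp_assoc]
  congr
  funext e
  simp [G.inv_inv]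

theorem outSum_comp_src {d : ℕ} (hreg : RegularGraph G d) (ψ : V → ℂ) (v : V) :
    G.outSum (ψ ∘ G.src) v = d * ψ v := by
  simp only [outSum, Function.comp_apply]
  rw [sum_congr rfl fun e he => congrArg ψ (mem_filter.1 he).2, sum_const, hreg v,
    nsmul_eq_mul]

theorem inSum_comp_tgt {d : ℕ} (hreg : RegularGraph G d) (ψ : V → ℂ) (v : V) :
    G.inSum (ψ ∘ G.tgt) v = d * ψ v := by
  rw [inSum_eq_outSum_comp_inv, Function.comp_assoc,
    show G.tgt ∘ G.inv = G.src from funext G.tgt_inv, outSum_comp_src G hreg]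

end EdgeSums

omit [Fintype V] in
theorem nbMatrix_mulVec_apply (G : OrientedGraph V E) (φ : E → ℂ) (f : E) :
    (nbMatrix G *ᵥ φ) f = G.inSum φ (G.src f) - φ (G.inv f) := by
  have hmem : G.inv f ∈ ({e | G.tgt e = G.src f} : Finset E) := by simp [G.tgt_inv]
  rw [inSum, ← add_sum_erase _ _ hmem, add_sub_cancel_left]
  simp only [mulVec, dotProduct, nbMatrix, of_apply, ite_mul, one_mul, zero_mul,
    sum_ite, sum_const_zero, add_zero]
  congr 1
  ext e
  simp [and_comm]

omit [DecidableEq E] in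
theorem adjMatrix_mulVec_apply (G : OrientedGraph V E) (ψ : V → ℂ) (v : V) :
    (adjMatrix G *ᵥ ψ) v = G.inSum (ψ ∘ G.src) v := by
  simp only [inSum, Function.comp_apply]
  rw [← sum_fiberwise _ G.src]
  refine sum_congr rfl fun u _ => ?_
  rw [filter_filter, sum_congr rfl fun e he => congrArg ψ (mem_filter.1 he).2.2, sum_const,
    nsmul_eq_mul]
  simp only [adjMatrix, of_apply, and_comm]

section NonBacktrackingEigenvector

variable {G : OrientedGraph V E} {d : ℕ} {lam : ℂ} {φ : E → ℂ}

omit [Fintype V] in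
theorem inSum_sub_of_nbEigen (hφ : nbMatrix G *ᵥ φ = lam • φ) (f : E) :
    G.inSum φ (G.src f) - φ (G.inv f) = lam * φ f := by
  simpa [nbMatrix_mulVec_apply] using congrFun hφ f

omit [Fintype V] in
theorem sq_sub_one_mul_of_nbEigen (hφ : nbMatrix G *ᵥ φ = lam • φ) (f : E) :
    (lam ^ 2 - 1) * φ f = lam * G.inSum φ (G.src f) - G.inSum φ (G.tgt f) := by
  have h := inSum_sub_of_nbEigen hφ f
  have h_inv := inSum_sub_of_nbEigen hφ (G.inv f)
  rw [G.inv_inv, src_inv] at h_inv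
  linear_combination (-lam) * h + h_inv

omit [Fintype V] in
theorem mul_outSum_of_nbEigen (hreg : RegularGraph G d) (hφ : nbMatrix G *ᵥ φ = lam • φ)
    (v : V) : lam * G.outSum φ v = (d - 1) * G.inSum φ v := by
  calc lam * G.outSum φ v
      = ∑ f with G.src f = v, (G.inSum φ (G.src f) - φ (G.inv f)) := by
        rw [outSum, mul_sum]
        exact sum_congr rfl fun f _ => (inSum_sub_of_nbEigen hφ f).symm
    _ = G.outSum (G.inSum φ ∘ G.src) v - G.outSum (φ ∘ G.inv) v := sum_sub_distrib _ _
    _ = (d - 1) * G.inSum φ v := by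
        rw [outSum_comp_src G hreg, ← inSum_eq_outSum_comp_inv]
        ring

theorem mul_inSum_of_nbEigen (hφ : nbMatrix G *ᵥ φ = lam • φ) (v : V) :
    lam * G.inSum φ v = (adjMatrix G *ᵥ G.inSum φ) v - G.outSum φ v := by
  calc lam * G.inSum φ v
      = ∑ f with G.tgt f = v, (G.inSum φ (G.src f) - φ (G.inv f)) := by
        rw [inSum, mul_sum]
        exact sum_congr rfl fun f _ => (inSum_sub_of_nbEigen hφ f).symm
    _ = G.inSum (G.inSum φ ∘ G.src) v - G.inSum (φ ∘ G.inv) v := sum_sub_distrib _ _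
    _ = (adjMatrix G *ᵥ G.inSum φ) v - G.outSum φ v := by
        rw [adjMatrix_mulVec_apply, outSum_eq_inSum_comp_inv]

theorem smul_adjMatrix_mulVec_inSum_of_nbEigen (hreg : RegularGraph G d)
    (hφ : nbMatrix G *ᵥ φ = lam • φ) :
    lam • (adjMatrix G *ᵥ G.inSum φ) = (lam ^ 2 + d - 1) • G.inSum φ := by
  funext v
  simp only [Pi.smul_apply, smul_eq_mul]
  linear_combination (-lam) * mul_inSum_of_nbEigen hφ v + mul_outSum_of_nbEigen hreg hφ v

omit [Fintype V] in
theorem inSum_ne_zero_of_nbEigen (hφ : nbMatrix G *ᵥ φ = lam • φ) (hlam : lam ^ 2 ≠ 1)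
    (hφ0 : φ ≠ 0) : G.inSum φ ≠ 0 := by
  intro hS
  refine hφ0 (funext fun f => ?_)
  have h := sq_sub_one_mul_of_nbEigen hφ f
  simp only [hS, Pi.zero_apply, mul_zero, sub_zero] at h
  exact (mul_eq_zero.1 h).resolve_left (sub_ne_zero.2 hlam)

omit [Fintype V] in
theorem ne_zero_of_nbEigen (hreg : RegularGraph G d) (hd : d ≠ 1)
    (hφ : nbMatrix G *ᵥ φ = lam • φ) (hS : G.inSum φ ≠ 0) : lam ≠ 0 := by
  rintro rfl
  refine hS (funext fun v => ?_)
  have h := mul_outSum_of_nbEigen hreg hφ v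
  rw [zero_mul, eq_comm, mul_eq_zero, sub_eq_zero] at h
  exact h.resolve_left (by exact_mod_cast hd)

theorem exists_adjMatrix_eigen_of_nbEigen (hreg : RegularGraph G d) (hd : d ≠ 1)
    (hlam : lam ^ 2 ≠ 1) (hφ0 : φ ≠ 0) (hφ : nbMatrix G *ᵥ φ = lam • φ) :
    ∃ μ : ℂ, (∃ ψ : V → ℂ, ψ ≠ 0 ∧ adjMatrix G *ᵥ ψ = μ • ψ) ∧
      lam ^ 2 - μ * lam + ((d : ℂ) - 1) = 0 := by
  have hS := inSum_ne_zero_of_nbEigen hφ hlam hφ0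
  have hlam0 := ne_zero_of_nbEigen hreg hd hφ hS
  refine ⟨(lam ^ 2 + d - 1) / lam, ⟨G.inSum φ, hS, ?_⟩, by field_simp; ring⟩
  rw [div_eq_inv_mul, mul_smul, ← smul_adjMatrix_mulVec_inSum_of_nbEigen hreg hφ,
    inv_smul_smul₀ hlam0]

end NonBacktrackingEigenvector

section AdjacencyEigenvector

variable (G : OrientedGraph V E)

def edgeLift (lam : ℂ) (ψ : V → ℂ) (e : E) : ℂ :=
  ψ (G.tgt e) - lam * ψ (G.src e)

variable {G} {d : ℕ} {lam μ : ℂ} {ψ : V → ℂ}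

theorem nbMatrix_mulVec_edgeLift (hreg : RegularGraph G d) (hψ : adjMatrix G *ᵥ ψ = μ • ψ)
    (hq : lam ^ 2 - μ * lam + ((d : ℂ) - 1) = 0) :
    nbMatrix G *ᵥ G.edgeLift lam ψ = lam • G.edgeLift lam ψ := by
  funext f
  have hin : G.inSum (G.edgeLift lam ψ) (G.src f)
      = d * ψ (G.src f) - lam * (adjMatrix G *ᵥ ψ) (G.src f) := by
    rw [adjMatrix_mulVec_apply, ← inSum_comp_tgt G hreg]
    simp only [inSum, edgeLift, Function.comp_apply, mul_sum, sum_sub_distrib]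
  rw [nbMatrix_mulVec_apply, hin, hψ]
  simp only [edgeLift, G.tgt_inv, src_inv, Pi.smul_apply, smul_eq_mul]
  linear_combination ψ (G.src f) * hq

omit [Fintype V] [Fintype E] [DecidableEq V] [DecidableEq E] in
theorem edgeLift_ne_zero (hsurj : Function.Surjective G.src) (hlam : lam ^ 2 ≠ 1)
    (hψ0 : ψ ≠ 0) : G.edgeLift lam ψ ≠ 0 := by
  intro h0
  refine hψ0 (funext fun v => ?_)
  obtain ⟨e, rfl⟩ := hsurj v
  have h := congrFun h0 e
  have h_inv := congrFun h0 (G.inv e)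
  simp only [edgeLift, G.tgt_inv, src_inv, Pi.zero_apply] at h h_inv
  have hsq : (lam ^ 2 - 1) * ψ (G.src e) = 0 := by linear_combination -(lam * h) - h_inv
  exact (mul_eq_zero.1 hsq).resolve_left (sub_ne_zero.2 hlam)

end AdjacencyEigenvector

end OrientedGraph

open OrientedGraph

/-- for a finite `d`-regular graph (`d ≥ 2`), a complex number `λ` with
`|λ| ≠ 1` is an eigenvalue of the non-backtracking matrix `B` iff there is an eigenvalue
`μ` of the adjacency matrix `A` with `λ² − μλ + (d−1) = 0`. -/
theorem stmt0 (G : OrientedGraph V E) (d : ℕ) (hd : 2 ≤ d) (hreg : RegularGraph G d)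
    (lam : ℂ) (hlam : ‖lam‖ ≠ 1) :
    (∃ φ : E → ℂ, φ ≠ 0 ∧ (nbMatrix G).mulVec φ = lam • φ) ↔
      ∃ μ : ℂ, (∃ ψ : V → ℂ, ψ ≠ 0 ∧ (adjMatrix G).mulVec ψ = μ • ψ) ∧
        lam ^ 2 - μ * lam + ((d : ℂ) - 1) = 0 := by
  have hsq : lam ^ 2 ≠ 1 := fun h => hlam <|
    (pow_eq_one_iff_of_nonneg (norm_nonneg lam) two_ne_zero).1 (by rw [← norm_pow, h, norm_one])
  constructor
  · rintro ⟨φ, hφ0, hφ⟩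
    exact exists_adjMatrix_eigen_of_nbEigen hreg (by omega) hsq hφ0 hφ
  · rintro ⟨μ, ⟨ψ, hψ0, hψ⟩, hq⟩
    exact ⟨_, edgeLift_ne_zero (src_surjective hreg (by omega)) hsq hψ0,
      nbMatrix_mulVec_edgeLift hreg hψ hq⟩
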